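/- Every free profinite group of finite rank m ≥ 2 is almost ω-free: for every finite embedding problem E = (α: Π → G, f: Γ → G) for a free profinite group Π of finite rank m ≥ 2, there exists an open subgroup H ⊆ Π such that α|_H: H → G is surjective and the induced embedding problem (α|_H, f) has a proper solution. -/

import Mathlib

open AlgebraicGeometry CategoryTheory CategoryTheory.Limits

universe u v

noncomputable section


/-- A profinite group `Π` is almost ω-free if every finite embedding problem
`(α : Π ↠ G, f : Γ ↠ G)` for `Π` has a proper solution after restriction to some open
subgroup `H ≤ Π` on which `α` remains surjective.  (Finite groups carry the discrete
topology.) -/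
def IsAlmostOmegaFree (P : Type v) [Group P] [TopologicalSpace P] : Prop :=
  ∀ (G Γ : Type) [Group G] [Group Γ] [Finite G] [Finite Γ] (α : P →* G) (f : Γ →* G),
    (@Continuous P G _ ⊥ α) → Function.Surjective α → Function.Surjective f →
    ∃ H : Subgroup P, IsOpen (H : Set P) ∧
      Function.Surjective (α.comp H.subtype) ∧
      ∃ γ : H →* Γ, (@Continuous H Γ _ ⊥ γ) ∧ Function.Surjective γ ∧
        f.comp γ = α.comp H.subtype

/-- A profinite group `Π` is ω-free if every finite embedding problem for `Π` has a
proper solution. -/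
def IsOmegaFree (P : Type v) [Group P] [TopologicalSpace P] : Prop :=
  ∀ (G Γ : Type) [Group G] [Group Γ] [Finite G] [Finite Γ] (α : P →* G) (f : Γ →* G),
    (@Continuous P G _ ⊥ α) → Function.Surjective α → Function.Surjective f →
    ∃ γ : P →* Γ, (@Continuous P Γ _ ⊥ γ) ∧ Function.Surjective γ ∧ f.comp γ = α

/-- `Π` is a free profinite group of rank `m`, i.e. the profinite completion of the free
group on `m` generators: it is a profinite group containing `m` distinguished elements
such that every map from these to a finite group extends uniquely to a continuous
homomorphism. -/
def IsFreeProfiniteOfRank (m : ℕ) (P : Type v) [Group P] [TopologicalSpace P] : Prop :=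
  IsTopologicalGroup P ∧ CompactSpace P ∧ T2Space P ∧ TotallyDisconnectedSpace P ∧
  ∃ ι : Fin m → P, ∀ (G : Type) [Group G] [Finite G] (g : Fin m → G),
    ∃! φ : {f : P →* G // @Continuous P G _ ⊥ f}, ∀ i, (φ : P →* G) (ι i) = g i

/-!
Lift the images under `α` of two basis elements `b₁ ≠ b₂` to `Γ` and map `Π` to the regular
wreath product `Γ ≀ᵣ C`, where `C` is cyclic of order `|Γ|² + 1`, hence prime to `|G|`:
`b₁` goes to a constant function times a generator of `C`, `b₂` to a function on `C` whose
values run through the whole fibre of `f` over `α b₂`. The kernel `H` of the projection to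
`C` is open, `α` stays surjective on `H` because the orders are coprime, and evaluation of the
base component at `1` solves the embedding problem on `H`; `f` of it agrees with `α` by
uniqueness in the universal property. The solution is surjective because conjugating `b₂` by
`b₁ ^ (|Γ| * j)`, which acts as a pure shift, reads off any prescribed point of that fibre.
-/
section DiscreteTarget

variable {X A B : Type*} [TopologicalSpace X]

theorem isOpen_preimage_of_continuous_bot {φ : X → A} (hφ : @Continuous X A _ ⊥ φ)
    (s : Set A) : IsOpen (φ ⁻¹' s) := by
  let _ : TopologicalSpace A := ⊥
  have : DiscreteTopology A := ⟨rfl⟩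
  exact hφ.isOpen_preimage s (isOpen_discrete s)

theorem continuous_bot_comp {φ : X → A} (hφ : @Continuous X A _ ⊥ φ) (g : A → B) :
    @Continuous X B _ ⊥ (g ∘ φ) :=
  @continuous_def _ _ _ ⊥ _ |>.2 fun s _ => isOpen_preimage_of_continuous_bot hφ (g ⁻¹' s)

theorem continuous_bot_prodMk {φ : X → A} {ψ : X → B} (hφ : @Continuous X A _ ⊥ φ)
    (hψ : @Continuous X B _ ⊥ ψ) : @Continuous X (A × B) _ ⊥ fun x => (φ x, ψ x) := by
  let _ : TopologicalSpace A := ⊥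
  let _ : TopologicalSpace B := ⊥
  have : DiscreteTopology A := ⟨rfl⟩
  have : DiscreteTopology B := ⟨rfl⟩
  rw [← DiscreteTopology.eq_bot (α := A × B)]
  exact hφ.prodMk hψ

end DiscreteTarget

theorem MonoidHom.prod_surjective_of_coprime {P A B : Type*} [Group P] [Group A] [Group B]
    [Finite A] [Finite B] {α : P →* A} {β : P →* B} (hα : Function.Surjective α)
    (hβ : Function.Surjective β) (hcop : (Nat.card A).Coprime (Nat.card B)) :
    Function.Surjective (α.prod β) := by
  set R := (α.prod β).range
  have hA : Nat.card A ∣ Nat.card R := Subgroup.card_dvd_of_surjective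
    ((MonoidHom.fst A B).comp R.subtype) fun a => by
      obtain ⟨x, rfl⟩ := hα a
      exact ⟨⟨_, x, rfl⟩, rfl⟩
  have hB : Nat.card B ∣ Nat.card R := Subgroup.card_dvd_of_surjective
    ((MonoidHom.snd A B).comp R.subtype) fun b => by
      obtain ⟨x, rfl⟩ := hβ b
      exact ⟨⟨_, x, rfl⟩, rfl⟩
  have hR : R = ⊤ := Subgroup.eq_top_of_card_eq _ <| Nat.dvd_antisymm
    (Subgroup.card_subgroup_dvd_card R) (Nat.card_prod A B ▸ hcop.mul_dvd_of_dvd_of_dvd hA hB)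
  exact MonoidHom.range_eq_top.1 hR

theorem Subgroup.eq_top_of_fiber_le {Γ G : Type*} [Group Γ] [Group G] (S : Subgroup Γ)
    (f : Γ →* G) (hS : ∀ z, ∃ s ∈ S, f s = z) (y : G) (hfib : ∀ g, f g = y → g ∈ S) :
    S = ⊤ := by
  refine eq_top_iff.2 fun x _ => ?_
  obtain ⟨s, hs, hsx⟩ := hS (f x)
  obtain ⟨t, ht, hty⟩ := hS y
  have hmem : t * s⁻¹ * x ∈ S := hfib _ (by simp [hsx, hty])
  simpa [mul_assoc] using S.mul_mem (S.mul_mem hs (S.inv_mem ht)) hmem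

theorem exists_fiber_valued_extension {Γ G T : Type*} {pt : Γ → T} (hpt : pt.Injective)
    (f : Γ → G) {g₀ : Γ} :
    ∃ w : T → Γ, (∀ t, f (w t) = f g₀) ∧ ∀ g, f g = f g₀ → w (pt g) = g := by
  classical
  refine ⟨fun t => if h : ∃ g, f g = f g₀ ∧ pt g = t then h.choose else g₀, fun t => ?_,
    fun g hg => ?_⟩
  · dsimp only
    split_ifs with h
    exacts [h.choose_spec.1, rfl]
  · have h : ∃ g', f g' = f g₀ ∧ pt g' = pt g := ⟨g, hg, rfl⟩
    simp only [dif_pos h]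
    exact hpt h.choose_spec.2

theorem injective_pow_mul_fin {M : Type*} [Monoid M] {q : M} {k : ℕ} (hk : k * k < orderOf q) :
    Function.Injective fun j : Fin k => q ^ (k * j) := by
  intro i j hij
  have hlt : ∀ j : Fin k, k * j < orderOf q := fun j =>
    (Nat.mul_lt_mul_of_pos_left j.2 (Fin.pos j)).trans hk
  exact Fin.ext <| Nat.eq_of_mul_eq_mul_left (Fin.pos i) (pow_injOn_Iio_orderOf (hlt i) (hlt j) hij)

namespace RegularWreathProduct

variable {D D' Q : Type*} [Group D] [Group D'] [Group Q]

@[simps]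
def map (f : D →* D') : D ≀ᵣ Q →* D' ≀ᵣ Q where
  toFun x := ⟨f ∘ x.left, x.right⟩
  map_one' := by ext <;> simp
  map_mul' x y := by ext <;> simp

@[simps]
def diag : D × Q →* D ≀ᵣ Q where
  toFun p := ⟨fun _ => p.1, p.2⟩
  map_one' := rfl
  map_mul' _ _ := rfl

def kerEval : (rightHom : D ≀ᵣ Q →* Q).ker →* D where
  toFun x := (x : D ≀ᵣ Q).left 1
  map_one' := rfl
  map_mul' x y := by
    have hx : (x : D ≀ᵣ Q).right = 1 := x.2
    simp [hx]

theorem inl_inv_mul_mul_inl (v : Q → D) (q : Q) :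
    ((inl q)⁻¹ * ⟨v, 1⟩ * inl q : D ≀ᵣ Q) = ⟨fun x => v (q * x), 1⟩ := by
  ext x <;> simp

end RegularWreathProduct

def IsProfiniteFreeBasis {X P : Type*} [Group P] [TopologicalSpace P] (b : X → P) : Prop :=
  ∀ (G : Type) [Group G] [Finite G] (g : X → G),
    ∃! φ : {f : P →* G // @Continuous P G _ ⊥ f}, ∀ i, (φ : P →* G) (b i) = g i

namespace IsProfiniteFreeBasis

variable {X P : Type*} [Group P] [TopologicalSpace P] {b : X → P}
  {G : Type} [Group G] [Finite G]

theorem exists_hom (hb : IsProfiniteFreeBasis b) (g : X → G) :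
    ∃ φ : P →* G, @Continuous P G _ ⊥ φ ∧ ∀ i, φ (b i) = g i :=
  let ⟨φ, hφ, _⟩ := hb G g
  ⟨φ.1, φ.2, hφ⟩

theorem hom_ext (hb : IsProfiniteFreeBasis b) {φ ψ : P →* G} (hφ : @Continuous P G _ ⊥ φ)
    (hψ : @Continuous P G _ ⊥ ψ) (h : ∀ i, φ (b i) = ψ (b i)) : φ = ψ := by
  obtain ⟨_, -, huniq⟩ := hb G (ψ ∘ b)
  exact congrArg Subtype.val ((huniq ⟨φ, hφ⟩ h).trans (huniq ⟨ψ, hψ⟩ fun _ => rfl).symm)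

end IsProfiniteFreeBasis

open RegularWreathProduct in
theorem exists_solution_of_wreathHom {P : Type*} [Group P] [TopologicalSpace P]
    {G Γ Q : Type} [Group G] [Group Γ] [Group Q] [Finite G] [Finite Q]
    (hcop : (Nat.card G).Coprime (Nat.card Q)) {α : P →* G} {f : Γ →* G}
    (hα : Function.Surjective α) (Ψ : P →* Γ ≀ᵣ Q) (hΨ : @Continuous P _ _ ⊥ Ψ)
    (hε : Function.Surjective (rightHom.comp Ψ))
    (hcompat : (map f).comp Ψ = diag.comp (α.prod (rightHom.comp Ψ)))
    (y : G) (hfib : ∀ g, f g = y → ∃ x, (Ψ x).right = 1 ∧ (Ψ x).left 1 = g) :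
    ∃ H : Subgroup P, IsOpen (H : Set P) ∧
      Function.Surjective (α.comp H.subtype) ∧
      ∃ γ : H →* Γ, (@Continuous H Γ _ ⊥ γ) ∧ Function.Surjective γ ∧
        f.comp γ = α.comp H.subtype := by
  set H := (rightHom : Γ ≀ᵣ Q →* Q).ker.comap Ψ
  set γ : H →* Γ := kerEval.comp (Ψ.subgroupComap _)
  have hαH : Function.Surjective (α.comp H.subtype) := fun g => by
    obtain ⟨x, hx⟩ := MonoidHom.prod_surjective_of_coprime hα hε hcop (g, 1)
    exact ⟨⟨x, congrArg Prod.snd hx⟩, congrArg Prod.fst hx⟩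
  have hfγ : f.comp γ = α.comp H.subtype := MonoidHom.ext fun x =>
    (congrArg (fun w : G ≀ᵣ Q => w.left 1) (DFunLike.congr_fun hcompat (x : P)) :)
  have hγ : Function.Surjective γ := by
    refine MonoidHom.range_eq_top.1 (γ.range.eq_top_of_fiber_le f (fun z => ?_) y fun g hg => ?_)
    · obtain ⟨x, hx⟩ := hαH z
      exact ⟨γ x, ⟨x, rfl⟩, (DFunLike.congr_fun hfγ x).trans hx⟩
    · obtain ⟨x, hx, rfl⟩ := hfib g hg
      exact ⟨⟨x, hx⟩, rfl⟩
  have hH : IsOpen (H : Set P) :=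
    isOpen_preimage_of_continuous_bot hΨ ((rightHom : Γ ≀ᵣ Q →* Q).ker : Set (Γ ≀ᵣ Q))
  refine ⟨H, hH, hαH, γ, ?_, hγ, hfγ⟩
  let _ : TopologicalSpace Γ := ⊥
  exact (continuous_bot_comp hΨ fun w : Γ ≀ᵣ Q => w.left 1).comp continuous_subtype_val

open RegularWreathProduct in
theorem IsProfiniteFreeBasis.exists_wreathHom {X P : Type*} [Group P] [TopologicalSpace P]
    {b : X → P} (hb : IsProfiniteFreeBasis b) {i₁ i₂ : X} (h12 : i₁ ≠ i₂)
    {G Γ Q : Type} [Group G] [Group Γ] [Group Q] [Finite G] [Finite Γ] [Finite Q]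
    {α : P →* G} {f : Γ →* G} (hα : @Continuous P G _ ⊥ α) (hf : Function.Surjective f)
    {q : Q} (hq : ∀ z, ∃ a : ℕ, q ^ a = z) (hk : Nat.card Γ * Nat.card Γ < orderOf q) :
    ∃ Ψ : P →* Γ ≀ᵣ Q, @Continuous P _ _ ⊥ Ψ ∧
      Function.Surjective (rightHom.comp Ψ) ∧
      (map f).comp Ψ = diag.comp (α.prod (rightHom.comp Ψ)) ∧
      ∀ g, f g = α (b i₂) → ∃ x, (Ψ x).right = 1 ∧ (Ψ x).left 1 = g := by
  classical
  choose c hc using fun i => hf (α (b i))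
  obtain ⟨w, hw, hw_pt⟩ := exists_fiber_valued_extension
    ((injective_pow_mul_fin hk).comp (Finite.equivFin Γ).injective) f (g₀ := c i₂)
  let δ : X → Q := Pi.mulSingle i₁ q
  obtain ⟨Ψ, hΨc, hΨ⟩ := hb.exists_hom
    fun i => if i = i₂ then (⟨w, 1⟩ : Γ ≀ᵣ Q) else diag (c i, δ i)
  have hε : ∀ i, (Ψ (b i)).right = δ i := fun i => by
    rw [hΨ]
    split_ifs with h
    · simp [δ, h, h12.symm]
    · rfl
  refine ⟨Ψ, hΨc, fun z => ?_, hb.hom_ext (continuous_bot_comp hΨc (map f))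
    (continuous_bot_comp (continuous_bot_prodMk hα (continuous_bot_comp hΨc rightHom)) diag)
    fun i => ?_, fun g hg => ?_⟩
  · obtain ⟨a, rfl⟩ := hq z
    exact ⟨b i₁ ^ a, by
      simp only [MonoidHom.comp_apply, map_pow, rightHom_eq_right, hε, δ, Pi.mulSingle_eq_same]⟩
  · show map f (Ψ (b i)) = diag (α (b i), (Ψ (b i)).right)
    rw [hε i, hΨ i]
    split_ifs with h
    · subst h
      ext t
      · exact (hw t).trans (hc i)
      · simp [δ, h12.symm]
    · ext t
      · exact hc i
      · rfl
  · set a := Nat.card Γ * Finite.equivFin Γ g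
    have hpow : Ψ (b i₁ ^ a) = inl (q ^ a) := by
      rw [map_pow, hΨ, if_neg h12, ← map_pow, Prod.pow_mk, pow_mul, pow_card_eq_one', one_pow]
      simp only [δ, Pi.mulSingle_eq_same]
      rfl
    refine ⟨(b i₁ ^ a)⁻¹ * b i₂ * b i₁ ^ a, ?_⟩
    rw [map_mul, map_mul, map_inv, hpow, hΨ, if_pos rfl, inl_inv_mul_mul_inl]
    exact ⟨rfl, by simpa using hw_pt g (hg.trans (hc i₂).symm)⟩

open Multiplicative in
theorem IsProfiniteFreeBasis.isAlmostOmegaFree {X P : Type*} [Group P] [TopologicalSpace P]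
    {b : X → P} (hb : IsProfiniteFreeBasis b) {i₁ i₂ : X} (h12 : i₁ ≠ i₂) :
    IsAlmostOmegaFree P := by
  intro G Γ _ _ _ _ α f hα hαs hfs
  set n := Nat.card Γ * Nat.card Γ + 1
  have hcard : Nat.card (Multiplicative (ZMod n)) = n := by
    rw [Nat.card_congr Multiplicative.toAdd, Nat.card_zmod]
  have hcop : (Nat.card G).Coprime (Nat.card (Multiplicative (ZMod n))) := by
    rw [hcard]
    exact (Nat.coprime_mul_left_add_right _ 1 _ |>.2 (Nat.coprime_one_right _)).coprime_dvd_left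
      (Subgroup.card_dvd_of_surjective f hfs)
  have hq : ∀ z : Multiplicative (ZMod n), ∃ a : ℕ, ofAdd (1 : ZMod n) ^ a = z := fun z =>
    ⟨z.toAdd.val, by rw [← ofAdd_nsmul, nsmul_one, ZMod.natCast_zmod_val]; rfl⟩
  have hk : Nat.card Γ * Nat.card Γ < orderOf (ofAdd (1 : ZMod n)) := by
    rw [orderOf_ofAdd_eq_addOrderOf, ZMod.addOrderOf_one]
    exact Nat.lt_succ_self _
  obtain ⟨Ψ, hΨ, hε, hcompat, hfib⟩ := hb.exists_wreathHom h12 hα hfs hq hk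
  exact exists_solution_of_wreathHom hcop hαs Ψ hΨ hε hcompat _ hfib

/-- **The higher-rank case of Corollary 4.3 (Harbater–Stevenson).**  Every free
profinite group of finite rank `m ≥ 2` is almost ω-free: every finite embedding problem
for it acquires a proper solution after restriction to a suitable open subgroup on
which the given surjection remains surjective. -/
theorem stmt14 (m : ℕ) (hm : 2 ≤ m) (P : Type v) [Group P] [TopologicalSpace P]
    (h : IsFreeProfiniteOfRank m P) :
    IsAlmostOmegaFree P := by
  obtain ⟨-, -, -, -, ι, hι⟩ := h
  exact IsProfiniteFreeBasis.isAlmostOmegaFree (b := ι) hι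
    (i₁ := ⟨0, by omega⟩) (i₂ := ⟨1, by omega⟩) (by simp)
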